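/- arXiv:2309.04202 — 7 statements merged into one kernel-verified Lean document; each statement's English description precedes it below -/
import Mathlib

section
/- Let X be a finite-dimensional real inner product space, let n ≥ 2, and let A_0, A_1, …, A_{n-1} be points in X, with indices read cyclically (A_n = A_0, A_{n+1} = A_1), such that A_i ≠ A_{i+1} for all i. For i = 1, …, n set φ_i := π − ∠A_{i-1}A_iA_{i+1}, where ∠A_{i-1}A_iA_{i+1} denotes the (unsigned) Euclidean angle at the vertex A_i between the points A_{i-1} and A_{i+1}. Then φ_1 + φ_2 + ⋯ + φ_n ≥ 2π. -/
/-!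
The edge vectors `v i = A (i + 1) - A i` are nonzero and sum to zero, and the exterior angle at
`A (i + 1)` is the angle between `v i` and `v (i + 1)`. For a cyclic sequence of nonzero vectors
summing to zero, the sum of the angles between consecutive vectors is at least `2π`, by induction
on the length: replacing two consecutive vectors `b, c` by `b + c` does not increase the sum, by
the triangle inequality for angles and `∠(b, c) = ∠(b, b + c) + ∠(b + c, c)`; if `b + c = 0`
the pair is dropped instead, which costs nothing since `∠(b, -b) = π`. The induction ends at a
pair `a, -a`, whose cyclic angle sum is exactly `2π`.
-/

open Real EuclideanGeometry

namespace InnerProductGeometry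

variable {V : Type*} [NormedAddCommGroup V] [InnerProductSpace ℝ V]

noncomputable def consecAngleSum : List V → ℝ
  | a :: b :: l => angle a b + consecAngleSum (b :: l)
  | _ => 0

@[simp] lemma consecAngleSum_singleton (a : V) : consecAngleSum [a] = 0 := rfl

@[simp] lemma consecAngleSum_cons_cons (a b : V) (l : List V) :
    consecAngleSum (a :: b :: l) = angle a b + consecAngleSum (b :: l) := rfl

lemma consecAngleSum_map_range (f : ℕ → V) (n : ℕ) :
    consecAngleSum ((List.range (n + 1)).map f) =
      ∑ i ∈ Finset.range n, angle (f i) (f (i + 1)) := by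
  induction n generalizing f with
  | zero => simp
  | succ n ih =>
    rw [List.range_succ_eq_map, List.map_cons, List.map_map, List.range_succ_eq_map,
      List.map_cons, consecAngleSum_cons_cons, ← List.map_cons, ← List.range_succ_eq_map, ih,
      Finset.sum_range_succ']
    simp [add_comm]

lemma angle_add_add_angle_add_le (a b d : V) {c : V} (hc : c ≠ 0) :
    angle a (b + c) + angle (b + c) d ≤ angle a b + angle b c + angle c d := by
  linarith [angle_le_angle_add_angle a b (b + c), angle_le_angle_add_angle (b + c) c d,
    angle_eq_angle_add_add_angle_add b hc, angle_comm c (b + c)]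

lemma consecAngleSum_merge_le (a b : V) {c : V} (hc : c ≠ 0) :
    ∀ l : List V, consecAngleSum (a :: (b + c) :: l) ≤ consecAngleSum (a :: b :: c :: l)
  | [] => by
    simp only [consecAngleSum_cons_cons, consecAngleSum_singleton]
    linarith [angle_le_angle_add_angle a b (b + c), angle_eq_angle_add_add_angle_add b hc,
      angle_nonneg c (b + c)]
  | d :: l => by
    simp only [consecAngleSum_cons_cons]
    linarith [angle_add_add_angle_add_le a b d hc]

lemma consecAngleSum_erase_antipodal_le (a : V) {b : V} (hb : b ≠ 0) :
    ∀ l : List V, consecAngleSum (a :: l) ≤ consecAngleSum (a :: b :: -b :: l)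
  | [] => by
    simp only [consecAngleSum_cons_cons, consecAngleSum_singleton]
    linarith [angle_nonneg a b, angle_nonneg b (-b)]
  | d :: l => by
    simp only [consecAngleSum_cons_cons, angle_self_neg_of_nonzero hb]
    linarith [angle_nonneg a b, angle_nonneg (-b) d, angle_le_pi a d]

theorem two_pi_le_consecAngleSum_of_sum_eq_zero {a : V} (ha : a ≠ 0) (l : List V)
    (hl : ∀ x ∈ l, x ≠ 0) (hsum : (a :: l).sum = 0) :
    2 * π ≤ consecAngleSum (a :: l ++ [a]) := by
  induction hlen : l.length using Nat.strong_induction_on generalizing l with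
  | _ n ih =>
  match l with
  | [] => exact absurd (by simpa using hsum) ha
  | [b] =>
    obtain rfl : b = -a := eq_neg_of_add_eq_zero_right (by simpa using hsum)
    simp only [List.cons_append, List.nil_append, consecAngleSum_cons_cons,
      consecAngleSum_singleton, angle_self_neg_of_nonzero ha, angle_neg_self_of_nonzero ha]
    linarith
  | b :: c :: l =>
    obtain ⟨hb, hc, hrest⟩ : b ≠ 0 ∧ c ≠ 0 ∧ ∀ x ∈ l, x ≠ 0 := by
      simpa only [List.forall_mem_cons] using hl
    by_cases hbc : b + c = 0
    · obtain rfl : c = -b := eq_neg_of_add_eq_zero_right hbc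
      calc 2 * π ≤ consecAngleSum (a :: l ++ [a]) :=
            ih l.length (by simp [← hlen]) l hrest (by simpa using hsum) rfl
        _ ≤ _ := consecAngleSum_erase_antipodal_le a hb _
    · calc 2 * π ≤ consecAngleSum (a :: (b + c) :: l ++ [a]) :=
            ih (l.length + 1) (by simp [← hlen]) ((b + c) :: l)
              (List.forall_mem_cons.2 ⟨hbc, hrest⟩) (by simpa [add_assoc] using hsum) rfl
        _ ≤ _ := consecAngleSum_merge_le a b hc _

theorem two_pi_le_sum_angle_of_sum_eq_zero {n : ℕ} (hn : n ≠ 0) {v : ℕ → V}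
    (hv : ∀ i < n, v i ≠ 0) (hper : v n = v 0) (hsum : ∑ i ∈ Finset.range n, v i = 0) :
    2 * π ≤ ∑ i ∈ Finset.range n, angle (v i) (v (i + 1)) := by
  obtain ⟨m, rfl⟩ := Nat.exists_eq_succ_of_ne_zero hn
  rw [← consecAngleSum_map_range, List.range_succ, List.map_append, List.map_singleton, hper,
    List.range_succ_eq_map, List.map_cons, List.map_map]
  refine two_pi_le_consecAngleSum_of_sum_eq_zero (hv 0 m.succ_pos) _ ?_ ?_
  · simpa using fun i hi => hv (i + 1) (by omega)
  · rw [← List.map_map, ← List.map_cons, ← List.range_succ_eq_map, ← hsum,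
      ← List.sum_toFinset _ List.nodup_range, List.toFinset_range]

end InnerProductGeometry

namespace EuclideanGeometry

theorem pi_sub_angle_eq_angle_vsub {V P : Type*} [NormedAddCommGroup V] [InnerProductSpace ℝ V]
    [MetricSpace P] [NormedAddTorsor V P] (p₁ p₂ p₃ : P) :
    π - ∠ p₁ p₂ p₃ = InnerProductGeometry.angle (p₂ -ᵥ p₁) (p₃ -ᵥ p₂) := by
  rw [angle, ← neg_vsub_eq_vsub_rev p₁ p₂, InnerProductGeometry.angle_neg_left]

end EuclideanGeometry

theorem closed_polygon_exterior_angle_sum_ge_two_pi_general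
    {X : Type*} [NormedAddCommGroup X] [InnerProductSpace ℝ X]
    (n : ℕ) (hn : 2 ≤ n) (A : ℕ → X)
    (hper : ∀ i, A (i + n) = A i)
    (hne : ∀ i, A i ≠ A (i + 1)) :
    2 * π ≤ ∑ i ∈ Finset.range n,
      (π - EuclideanGeometry.angle (A i) (A (i + 1)) (A (i + 2))) := by
  set v : ℕ → X := fun i => A (i + 1) - A i
  have hA : A n = A 0 := by simpa using hper 0
  have hv : v n = v 0 := by simp only [v, hA, add_comm n, hper]
  have hsum : ∑ i ∈ Finset.range n, v i = 0 := by
    simp only [v, Finset.sum_range_sub, hA, sub_self]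
  simp_rw [pi_sub_angle_eq_angle_vsub, vsub_eq_sub]
  exact InnerProductGeometry.two_pi_le_sum_angle_of_sum_eq_zero (by omega)
    (fun i _ => sub_ne_zero.2 (hne i).symm) hv hsum

/-- **Lemma (closed polygon angle sum).** If `A 0, …, A (n-1)` are points in a
finite-dimensional real inner product space, read cyclically, with consecutive
points distinct, then the sum of the exterior angles `π − ∠ A_{i-1} A_i A_{i+1}`
is at least `2π`. -/
theorem closed_polygon_exterior_angle_sum_ge_two_pi
    {X : Type*} [NormedAddCommGroup X] [InnerProductSpace ℝ X]
    [FiniteDimensional ℝ X]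
    (n : ℕ) (hn : 2 ≤ n) (A : ℕ → X)
    (hper : ∀ i, A (i + n) = A i)
    (hne : ∀ i, A i ≠ A (i + 1)) :
    2 * π ≤ ∑ i ∈ Finset.range n,
      (π - EuclideanGeometry.angle (A i) (A (i + 1)) (A (i + 2))) :=
  closed_polygon_exterior_angle_sum_ge_two_pi_general n hn A hper hne
end

section
/- Let d ≥ 2 and let A, B, C be points in ℝ^d with A ≠ B and C ≠ B. Let σ be the uniform probability measure on the unit sphere S^{d-1} ⊂ ℝ^d. Then σ({u ∈ S^{d-1} : ⟨u, B⟩ ≥ ⟨u, A⟩ and ⟨u, B⟩ ≥ ⟨u, C⟩}) = (π − ∠ABC)/(2π), where ∠ABC is the unsigned angle in [0, π] between A − B and C − B. -/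
/-!
The directions `u` for which `⟪u, ·⟫` is maximal at the vertex `B` form, on the sphere, the
"lune" `⟪u, B - A⟫ ≥ 0 ≥ ⟪u, C - B⟫` cut out by two half-spaces, and the angle between
`B - A` and `C - B` is `π - ∠ABC`. Rotation invariance makes the measure of a lune a function
of the angle `θ` between its normals alone. Hyperplanes are null (infinitely many rotated
copies of a proper subspace meet pairwise in smaller subspaces), so adjacent lunes in a common
plane add up: the measure is an additive, nonnegative function of `θ ∈ [0, π]`, hence linear,
and it is `1/2` at `θ = π`, where the lune is a half-space.
-/

open Real MeasureTheory Metric Module InnerProductGeometry Submodule Function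
open scoped RealInnerProductSpace

theorem eq_div_mul_of_add_of_nonneg {F : ℝ → ℝ} {a : ℝ} (ha : 0 < a)
    (hadd : ∀ x y, 0 ≤ x → 0 ≤ y → x + y ≤ a → F (x + y) = F x + F y)
    (hF : ∀ x, 0 ≤ x → x ≤ a → 0 ≤ F x) {x : ℝ} (hx₀ : 0 ≤ x) (hxa : x ≤ a) :
    F x = x / a * F a := by
  have hmono : ∀ x y, 0 ≤ x → x ≤ y → y ≤ a → F x ≤ F y := fun x y hx hxy hya => by
    have := hadd x (y - x) hx (by linarith) (by linarith)
    rw [add_sub_cancel] at this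
    linarith [hF (y - x) (by linarith) (by linarith)]
  have hnsmul : ∀ (k : ℕ) (δ : ℝ), 0 ≤ δ → k * δ ≤ a → F (k * δ) = k * F δ := by
    intro k δ hδ hkδ
    induction k with
    | zero => simpa using hadd 0 0 le_rfl le_rfl (by simpa using ha.le)
    | succ k ih =>
      push_cast at hkδ ⊢
      have hk : k * δ ≤ a := by nlinarith
      rw [add_mul, one_mul, hadd _ _ (by positivity) hδ (by linarith), ih hk]
      ring
  have hFa : 0 ≤ F a := hF a ha.le le_rfl
  -- Cutting `[0, a]` into `n` equal pieces pins `F` down up to an error `F a / n`.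
  have hlower : ∀ ε > 0, ∀ x, 0 ≤ x → x ≤ a → x / a * F a ≤ F x + ε := by
    intro ε hε x hx₀ hxa
    obtain ⟨n, hn⟩ := exists_nat_gt (F a / ε)
    have hn₀ : (0 : ℝ) < n := lt_of_le_of_lt (by positivity) hn
    set δ := a / n
    have hδ : 0 < δ := by positivity
    have hnδ : n * δ = a := by simp only [δ]; field_simp
    have hFδ : F δ = F a / n := by
      rw [eq_div_iff hn₀.ne', mul_comm, ← hnsmul n δ hδ.le hnδ.le, hnδ]
    set k := ⌊x / δ⌋₊
    have hkδ : k * δ ≤ x := (le_div_iff₀ hδ).mp (Nat.floor_le (by positivity))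
    have hk : x / δ < k + 1 := Nat.lt_floor_add_one _
    have hεn : F a / n < ε := by rwa [div_lt_iff₀ hn₀, mul_comm, ← div_lt_iff₀ hε]
    calc x / a * F a = x / δ * F δ := by rw [hFδ]; simp only [δ]; field_simp
      _ ≤ (k + 1) * F δ := by gcongr; rw [hFδ]; positivity
      _ = F (k * δ) + F a / n := by rw [hnsmul k δ hδ.le (by linarith), hFδ]; ring
      _ ≤ F x + ε := by gcongr; exact hmono _ _ (by positivity) hkδ hxa
  refine le_antisymm (le_of_forall_pos_le_add fun ε hε => ?_)
    (le_of_forall_pos_le_add fun ε hε => hlower ε hε x hx₀ hxa)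
  have h := hlower ε hε (a - x) (by linarith) (by linarith)
  have hsum := hadd x (a - x) hx₀ (by linarith) (by linarith)
  rw [add_sub_cancel] at hsum
  have : (a - x) / a * F a = F a - x / a * F a := by field_simp
  linarith

theorem sector_union_iff {α β x y : ℝ} (hα : 0 ≤ α) (hβ : 0 ≤ β) (hαβ : α + β ≤ π)
    (hXα : cos α * x + sin α * y ≠ 0) :
    (0 ≤ x ∧ cos α * x + sin α * y ≤ 0) ∨
        (0 ≤ cos α * x + sin α * y ∧ cos (α + β) * x + sin (α + β) * y ≤ 0) ↔
      0 ≤ x ∧ cos (α + β) * x + sin (α + β) * y ≤ 0 := by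
  set Xα := cos α * x + sin α * y
  set Xθ := cos (α + β) * x + sin (α + β) * y
  -- three points `0, α, α + β` on a circle are linearly dependent
  have key : sin β * x + sin α * Xθ = sin (α + β) * Xα := by
    have h := sin_sub (α + β) α
    rw [add_sub_cancel_left] at h
    simp only [Xα, Xθ, h]
    ring
  have hsα : 0 ≤ sin α := sin_nonneg_of_nonneg_of_le_pi hα (by linarith)
  have hsβ : 0 ≤ sin β := sin_nonneg_of_nonneg_of_le_pi hβ (by linarith)
  have hsθ : 0 ≤ sin (α + β) := sin_nonneg_of_nonneg_of_le_pi (by linarith) hαβ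
  constructor
  · rintro (⟨hx, hα'⟩ | ⟨hα', hθ'⟩)
    · refine ⟨hx, ?_⟩
      rcases hα.eq_or_lt with rfl | hα₀
      · simp only [Xα, cos_zero, sin_zero, one_mul, zero_mul, add_zero] at hα' hXα
        exact absurd (le_antisymm hα' hx) hXα
      rcases hαβ.eq_or_lt with hπ | hπ
      · simp only [Xθ, hπ, cos_pi, sin_pi]; linarith
      · have : 0 < sin α := sin_pos_of_pos_of_lt_pi hα₀ (by linarith)
        nlinarith
    · refine ⟨?_, hθ'⟩
      rcases hβ.eq_or_lt with rfl | hβ₀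
      · simp only [add_zero, Xθ] at hθ'; exact absurd (le_antisymm hθ' hα') hXα
      rcases (show β ≤ π by linarith).eq_or_lt with rfl | hβπ
      · obtain rfl : α = 0 := by linarith
        simpa [Xα] using hα'
      · have : 0 < sin β := sin_pos_of_pos_of_lt_pi hβ₀ hβπ
        nlinarith
  · rintro ⟨hx, hθ'⟩
    rcases le_total Xα 0 with h | h
    exacts [Or.inl ⟨hx, h⟩, Or.inr ⟨h, hθ'⟩]

theorem MeasureTheory.measure_eq_zero_of_pairwise_aedisjoint {α ι : Type*} [Infinite ι]
    {_ : MeasurableSpace α} {μ : Measure α} [IsFiniteMeasure μ] {s : ι → Set α} {c : ENNReal}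
    (hs : ∀ i, NullMeasurableSet (s i) μ) (hd : Pairwise (AEDisjoint μ on s))
    (hc : ∀ i, μ (s i) = c) : c = 0 := by
  by_contra h
  have := tsum_meas_le_meas_iUnion_of_disjoint₀ μ hs hd
  simp only [hc, ENNReal.tsum_const_eq_top_of_ne_zero h, top_le_iff] at this
  exact measure_ne_top μ _ this

variable {E : Type*} [NormedAddCommGroup E] [InnerProductSpace ℝ E]

/-- Two reflections suffice: the first moves `p` to `p'`, the second fixes `p'` and moves the
image of `q` to `q'`. -/
theorem exists_linearIsometryEquiv_apply_pair {p q p' q' : E} (hp : ‖p‖ = ‖p'‖)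
    (hq : ‖q‖ = ‖q'‖) (hpq : ⟪p, q⟫ = ⟪p', q'⟫) :
    ∃ g : E ≃ₗᵢ[ℝ] E, g p = p' ∧ g q = q' := by
  set g₁ := reflection (ℝ ∙ (p - p'))ᗮ
  have hg₁p : g₁ p = p' := reflection_sub hp
  set r := g₁ q
  have hr : ‖r‖ = ‖q'‖ := by rw [g₁.norm_map, hq]
  set g₂ := reflection (ℝ ∙ (r - q'))ᗮ
  have hg₂p' : g₂ p' = p' := by
    refine reflection_mem_subspace_eq_self ?_
    rw [mem_orthogonal_singleton_iff_inner_left, inner_sub_right, ← hpq, ← hg₁p,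
      g₁.inner_map_map, sub_self]
  exact ⟨g₁.trans g₂, by simp [hg₁p, hg₂p'], reflection_sub hr⟩

theorem exists_orthonormal_pair [FiniteDimensional ℝ E] (h : 2 ≤ finrank ℝ E) :
    ∃ e₁ e₂ : E, ‖e₁‖ = 1 ∧ ‖e₂‖ = 1 ∧ ⟪e₁, e₂⟫ = 0 := by
  have hb := (stdOrthonormalBasis ℝ E).orthonormal
  exact ⟨_, _, hb.1 ⟨0, by omega⟩, hb.1 ⟨1, by omega⟩, hb.2 (by simp [Fin.ext_iff])⟩

noncomputable def circlePoint (e₁ e₂ : E) (t : ℝ) : E := cos t • e₁ + sin t • e₂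

section circlePoint

variable {e₁ e₂ : E}

theorem inner_circlePoint_right (u : E) (t : ℝ) :
    ⟪u, circlePoint e₁ e₂ t⟫ = cos t * ⟪u, e₁⟫ + sin t * ⟪u, e₂⟫ := by
  simp only [circlePoint, inner_add_right, real_inner_smul_right]

theorem inner_circlePoint (he₁ : ‖e₁‖ = 1) (he₂ : ‖e₂‖ = 1) (he : ⟪e₁, e₂⟫ = 0) (s t : ℝ) :
    ⟪circlePoint e₁ e₂ s, circlePoint e₁ e₂ t⟫ = cos (s - t) := by
  have he' : ⟪e₂, e₁⟫ = 0 := by rwa [real_inner_comm]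
  simp only [circlePoint, inner_add_left, inner_add_right, real_inner_smul_left,
    real_inner_smul_right, real_inner_self_eq_norm_sq, he₁, he₂, he, he', cos_sub]
  ring

theorem norm_circlePoint (he₁ : ‖e₁‖ = 1) (he₂ : ‖e₂‖ = 1) (he : ⟪e₁, e₂⟫ = 0) (t : ℝ) :
    ‖circlePoint e₁ e₂ t‖ = 1 := by
  have h := inner_circlePoint he₁ he₂ he t t
  rwa [sub_self, cos_zero, real_inner_self_eq_norm_sq,
    pow_eq_one_iff_of_nonneg (norm_nonneg _) two_ne_zero] at h

@[simp] theorem circlePoint_pi : circlePoint e₁ e₂ π = -e₁ := by simp [circlePoint]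

end circlePoint

theorem Submodule.exists_seq_map_pairwise_ne [FiniteDimensional ℝ E] {U : Submodule ℝ E}
    (h₀ : U ≠ ⊥) (h₁ : U ≠ ⊤) :
    ∃ g : ℕ → E ≃ₗᵢ[ℝ] E,
      Pairwise fun m n => U.map (g m : E →ₗ[ℝ] E) ≠ U.map (g n : E →ₗ[ℝ] E) := by
  obtain ⟨u, huU, hu⟩ : ∃ u ∈ U, ‖u‖ = 1 := by
    obtain ⟨x, hxU, hx⟩ := U.exists_mem_ne_zero_of_ne_bot h₀
    exact ⟨‖x‖⁻¹ • x, U.smul_mem _ hxU, norm_smul_inv_norm hx⟩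
  obtain ⟨v, hvU, hv⟩ : ∃ v ∈ Uᗮ, ‖v‖ = 1 := by
    obtain ⟨x, hxU, hx⟩ := Uᗮ.exists_mem_ne_zero_of_ne_bot (by rwa [ne_eq, orthogonal_eq_bot_iff])
    exact ⟨‖x‖⁻¹ • x, Uᗮ.smul_mem _ hxU, norm_smul_inv_norm hx⟩
  have huv : ⟪u, v⟫ = 0 := inner_right_of_mem_orthogonal huU hvU
  -- `g t` rotates the plane of `u ∈ U` and `v ∈ Uᗮ` by `t`; if `g s` and `g t` had the same
  -- image of `U`, then `g t u` would be orthogonal to `g s v`, i.e. `sin (s - t) = 0`.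
  have hrot : ∀ t, ∃ g : E ≃ₗᵢ[ℝ] E,
      g u = circlePoint u v t ∧ g v = circlePoint u v (t + π / 2) := fun t =>
    exists_linearIsometryEquiv_apply_pair (by rw [hu, norm_circlePoint hu hv huv])
      (by rw [hv, norm_circlePoint hu hv huv])
      (by rw [inner_circlePoint hu hv huv, huv]; simp)
  choose g hgu hgv using hrot
  have hne : ∀ s t, |s - t| < π → s ≠ t →
      U.map (g s : E →ₗ[ℝ] E) ≠ U.map (g t : E →ₗ[ℝ] E) := by
    intro s t hst hst' heq
    have hmem : g t u ∈ U.map (g s : E →ₗ[ℝ] E) := heq ▸ mem_map_of_mem huU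
    obtain ⟨w, hwU, hw⟩ := mem_map.mp hmem
    replace hw : g s w = g t u := hw
    have h := inner_circlePoint hu hv huv (s + π / 2) t
    rw [← hgv, ← hgu, ← hw, LinearIsometryEquiv.inner_map_map,
      inner_left_of_mem_orthogonal hwU hvU, add_sub_right_comm, cos_add_pi_div_two,
      zero_eq_neg, sin_eq_zero_iff_of_lt_of_lt (neg_lt_of_abs_lt hst) (lt_of_abs_lt hst),
      sub_eq_zero] at h
    exact hst' h
  have hθ : ∀ n : ℕ, 0 < ((n : ℝ) + 1)⁻¹ ∧ ((n : ℝ) + 1)⁻¹ ≤ 1 := fun n =>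
    ⟨by positivity, inv_le_one_of_one_le₀ (by simp)⟩
  refine ⟨fun n => g ((n : ℝ) + 1)⁻¹, fun m n hmn => hne _ _ ?_ (by simpa using hmn)⟩
  rw [abs_sub_lt_iff]
  constructor <;> linarith [hθ m, hθ n, pi_gt_three]

def lune (p q : E) : Set E := {u | 0 ≤ ⟪u, p⟫ ∧ ⟪u, q⟫ ≤ 0}

theorem lune_smul {a b : ℝ} (ha : 0 < a) (hb : 0 < b) (p q : E) :
    lune (a • p) (b • q) = lune p q := by
  ext u
  simp only [lune, Set.mem_ofPred_eq, real_inner_smul_right, mul_nonneg_iff_of_pos_left ha]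
  rw [← neg_nonneg, ← mul_neg, mul_nonneg_iff_of_pos_left hb, neg_nonneg]

theorem lune_neg_right (p : E) : lune p (-p) = {u | 0 ≤ ⟪u, p⟫} := by
  ext u
  simp [lune, inner_neg_right]

theorem preimage_lune (g : E ≃ₗᵢ[ℝ] E) (p q : E) : g ⁻¹' lune (g p) (g q) = lune p q := by
  ext u
  simp [lune, g.inner_map_map]

section Measure

variable [MeasurableSpace E] [BorelSpace E] {σ : Measure E}

theorem measure_preimage_linearIsometryEquiv (hinv : ∀ g : E ≃ₗᵢ[ℝ] E, σ.map g = σ)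
    (g : E ≃ₗᵢ[ℝ] E) (s : Set E) : σ (g ⁻¹' s) = σ s := by
  rw [← g.coe_toMeasurableEquiv, ← MeasurableEquiv.map_apply, g.coe_toMeasurableEquiv, hinv]

theorem measurableSet_lune (p q : E) : MeasurableSet (lune p q) := by
  simp only [lune, Set.ofPred_and]
  exact ((isClosed_le continuous_const (by fun_prop)).inter
    (isClosed_le (by fun_prop) continuous_const)).measurableSet

theorem measure_lune_eq_of_inner_eq (hinv : ∀ g : E ≃ₗᵢ[ℝ] E, σ.map g = σ) {p q p' q' : E}
    (hp : ‖p‖ = ‖p'‖) (hq : ‖q‖ = ‖q'‖) (hpq : ⟪p, q⟫ = ⟪p', q'⟫) :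
    σ (lune p q) = σ (lune p' q') := by
  obtain ⟨g, rfl, rfl⟩ := exists_linearIsometryEquiv_apply_pair hp hq hpq
  rw [← preimage_lune g, measure_preimage_linearIsometryEquiv hinv]

variable [FiniteDimensional ℝ E]

theorem measure_submodule_eq_zero [IsFiniteMeasure σ] (hinv : ∀ g : E ≃ₗᵢ[ℝ] E, σ.map g = σ)
    (h₀ : σ {0} = 0) {U : Submodule ℝ E} (hU : U ≠ ⊤) : σ U = 0 := by
  induction hk : finrank ℝ U using Nat.strong_induction_on generalizing U with
  | _ k ih =>
  rcases eq_or_ne U ⊥ with rfl | hU₀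
  · simpa using h₀
  obtain ⟨g, hg⟩ := U.exists_seq_map_pairwise_ne hU₀ hU
  set V : ℕ → Submodule ℝ E := fun n => U.map (g n : E →ₗ[ℝ] E)
  have hrank : ∀ n, finrank ℝ (V n) = k := fun n =>
    hk ▸ LinearEquiv.finrank_map_eq (g n).toLinearEquiv U
  -- Distinct rotated copies of `U` meet in subspaces of smaller dimension, null by induction.
  refine measure_eq_zero_of_pairwise_aedisjoint (μ := σ) (s := fun n => (V n : Set E))
    (fun n => (V n).closed_of_finiteDimensional.measurableSet.nullMeasurableSet)
    (fun m n hmn => ?_) (fun n => ?_)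
  · have hlt : V m ⊓ V n < V m := inf_lt_left.mpr fun hle =>
      hg hmn (eq_of_le_of_finrank_eq hle (by rw [hrank, hrank]))
    have := ih _ (hrank m ▸ finrank_lt_finrank_of_lt hlt) (lt_of_lt_of_le hlt le_top).ne rfl
    rwa [coe_inf] at this
  · change σ (g n '' U) = σ U
    rw [LinearIsometryEquiv.image_eq_preimage_symm, measure_preimage_linearIsometryEquiv hinv]

theorem ae_inner_ne_zero [IsFiniteMeasure σ] (hinv : ∀ g : E ≃ₗᵢ[ℝ] E, σ.map g = σ)
    (h₀ : σ {0} = 0) {p : E} (hp : p ≠ 0) : ∀ᵐ u ∂σ, ⟪u, p⟫ ≠ 0 := by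
  have hH : {u : E | ¬⟪u, p⟫ ≠ 0} = ((ℝ ∙ p)ᗮ : Submodule ℝ E) := by
    ext u
    simp [mem_orthogonal_singleton_iff_inner_left, real_inner_comm]
  rw [ae_iff, hH]
  exact measure_submodule_eq_zero hinv h₀ (by simpa [orthogonal_eq_top_iff] using hp)

theorem measure_inner_nonneg [IsProbabilityMeasure σ] (hinv : ∀ g : E ≃ₗᵢ[ℝ] E, σ.map g = σ)
    (h₀ : σ {0} = 0) {p : E} (hp : p ≠ 0) : σ {u | 0 ≤ ⟪u, p⟫} = 1 / 2 := by
  set H := {u : E | 0 ≤ ⟪u, p⟫}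
  set H' := LinearIsometryEquiv.neg ℝ ⁻¹' H
  have hH' : σ H' = σ H := measure_preimage_linearIsometryEquiv hinv _ _
  have hunion : H ∪ H' = Set.univ := by
    ext u
    simp [H, H', inner_neg_left, le_total]
  have hdisj : AEDisjoint σ H H' := by
    refine measure_eq_zero_iff_ae_notMem.mpr ?_
    filter_upwards [ae_inner_ne_zero hinv h₀ hp] with u hu ⟨h, h'⟩
    simp only [H', H, Set.mem_preimage, Set.mem_ofPred_eq, LinearIsometryEquiv.coe_neg,
      inner_neg_left, neg_nonneg] at h h'
    exact hu (le_antisymm h' h)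
  have hH'meas : MeasurableSet H' :=
    (isClosed_le continuous_const (continuous_id.inner continuous_const)).measurableSet.preimage
      (LinearIsometryEquiv.neg ℝ).continuous.measurable
  have := measure_union₀ hH'meas.nullMeasurableSet hdisj
  rw [hunion, measure_univ, hH'] at this
  rw [ENNReal.eq_div_iff two_ne_zero ENNReal.ofNat_ne_top, this, two_mul]

/-- The lune of angle `α + β` is cut by the hyperplane `(circlePoint e₁ e₂ α)ᗮ` into the lune of
angle `α` and a rotated copy of the lune of angle `β`. -/
theorem measure_lune_circlePoint_add [IsFiniteMeasure σ] {e₁ e₂ : E}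
    (hinv : ∀ g : E ≃ₗᵢ[ℝ] E, σ.map g = σ) (h₀ : σ {0} = 0) (he₁ : ‖e₁‖ = 1) (he₂ : ‖e₂‖ = 1)
    (he : ⟪e₁, e₂⟫ = 0) {α β : ℝ} (hα : 0 ≤ α) (hβ : 0 ≤ β) (hαβ : α + β ≤ π) :
    σ (lune e₁ (circlePoint e₁ e₂ (α + β))) =
      σ (lune e₁ (circlePoint e₁ e₂ α)) + σ (lune e₁ (circlePoint e₁ e₂ β)) := by
  have hnorm := norm_circlePoint he₁ he₂ he
  have hae : ∀ᵐ u ∂σ, ⟪u, circlePoint e₁ e₂ α⟫ ≠ 0 :=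
    ae_inner_ne_zero hinv h₀ (norm_ne_zero_iff.mp (by simp [hnorm]))
  have hsplit : (lune e₁ (circlePoint e₁ e₂ α) ∪
      lune (circlePoint e₁ e₂ α) (circlePoint e₁ e₂ (α + β)) : Set E) =ᵐ[σ]
      lune e₁ (circlePoint e₁ e₂ (α + β)) := by
    refine Filter.eventuallyEq_set.mpr ?_
    filter_upwards [hae] with u hu
    rw [inner_circlePoint_right] at hu
    simpa only [Set.mem_union, lune, Set.mem_ofPred_eq, inner_circlePoint_right]
      using sector_union_iff hα hβ hαβ hu
  have hdisj : AEDisjoint σ (lune e₁ (circlePoint e₁ e₂ α))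
      (lune (circlePoint e₁ e₂ α) (circlePoint e₁ e₂ (α + β))) := by
    refine measure_eq_zero_iff_ae_notMem.mpr ?_
    filter_upwards [hae] with u hu ⟨⟨_, h⟩, ⟨h', _⟩⟩
    exact hu (le_antisymm h h')
  have hrot : σ (lune (circlePoint e₁ e₂ α) (circlePoint e₁ e₂ (α + β))) =
      σ (lune e₁ (circlePoint e₁ e₂ β)) := by
    refine measure_lune_eq_of_inner_eq hinv (by rw [hnorm, he₁]) (by rw [hnorm, hnorm]) ?_
    rw [inner_circlePoint he₁ he₂ he, inner_circlePoint_right, real_inner_self_eq_norm_sq, he₁, he]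
    simp
  rw [← measure_congr hsplit, measure_union₀ (measurableSet_lune _ _).nullMeasurableSet hdisj,
    hrot]

theorem measure_lune [IsProbabilityMeasure σ] (hE : 2 ≤ finrank ℝ E)
    (hinv : ∀ g : E ≃ₗᵢ[ℝ] E, σ.map g = σ) (h₀ : σ {0} = 0) {p q : E} (hp : p ≠ 0) (hq : q ≠ 0) :
    σ (lune p q) = ENNReal.ofReal (angle p q / (2 * π)) := by
  obtain ⟨e₁, e₂, he₁, he₂, he⟩ := exists_orthonormal_pair hE
  set F : ℝ → ℝ := fun t => (σ (lune e₁ (circlePoint e₁ e₂ t))).toReal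
  have hF : ∀ t, 0 ≤ t → t ≤ π → F t = t / π * F π := fun t ht₀ htπ =>
    eq_div_mul_of_add_of_nonneg (F := F) pi_pos (fun α β hα hβ hαβ => by
      simp only [F, measure_lune_circlePoint_add hinv h₀ he₁ he₂ he hα hβ hαβ,
        ENNReal.toReal_add (measure_ne_top _ _) (measure_ne_top _ _)])
      (fun _ _ _ => ENNReal.toReal_nonneg) ht₀ htπ
  have hFπ : F π = 1 / 2 := by
    have he₁₀ : e₁ ≠ 0 := norm_ne_zero_iff.mp (by simp [he₁])
    simp [F, lune_neg_right, measure_inner_nonneg hinv h₀ he₁₀]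
  have hpq : σ (lune p q) = σ (lune e₁ (circlePoint e₁ e₂ (angle p q))) := by
    rw [measure_lune_eq_of_inner_eq hinv (p' := ‖p‖ • e₁)
      (q' := ‖q‖ • circlePoint e₁ e₂ (angle p q)),
      lune_smul (norm_pos_iff.mpr hp) (norm_pos_iff.mpr hq)]
    · simp [norm_smul, he₁]
    · simp [norm_smul, norm_circlePoint he₁ he₂ he]
    · rw [real_inner_smul_left, real_inner_smul_right, inner_circlePoint_right,
        real_inner_self_eq_norm_sq, he₁, he, ← cos_angle_mul_norm_mul_norm]
      ring
  rw [hpq, ← ENNReal.ofReal_toReal (measure_ne_top _ _)]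
  congr 1
  change F (angle p q) = _
  rw [hF _ (angle_nonneg p q) (angle_le_pi p q), hFπ]
  field_simp

end Measure

/-- **Lemma.** Let `σ` be the uniform (i.e. rotation-invariant) probability
measure on the unit sphere `S^{d-1} ⊆ ℝ^d`, `d ≥ 2`.  For points `A B C` with
`A ≠ B`, `C ≠ B`, the `σ`-measure of the set of directions `u` on the sphere
for which `⟨u, B⟩ ≥ ⟨u, A⟩` and `⟨u, B⟩ ≥ ⟨u, C⟩` equals `(π − ∠ABC) / (2π)`. -/
theorem measure_directions_maximal_at_vertex
    (d : ℕ) (hd : 2 ≤ d)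
    (A B C : EuclideanSpace ℝ (Fin d)) (hA : A ≠ B) (hC : C ≠ B)
    (σ : Measure (EuclideanSpace ℝ (Fin d))) [IsProbabilityMeasure σ]
    (hsupp : σ (sphere (0 : EuclideanSpace ℝ (Fin d)) 1)ᶜ = 0)
    (hinv : ∀ g : EuclideanSpace ℝ (Fin d) ≃ₗᵢ[ℝ] EuclideanSpace ℝ (Fin d),
      Measure.map g σ = σ) :
    σ {u : EuclideanSpace ℝ (Fin d) |
        u ∈ sphere (0 : EuclideanSpace ℝ (Fin d)) 1 ∧
        (inner ℝ u A : ℝ) ≤ inner ℝ u B ∧ (inner ℝ u C : ℝ) ≤ inner ℝ u B}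
      = ENNReal.ofReal ((π - EuclideanGeometry.angle A B C) / (2 * π)) := by
  have h₀ : σ {0} = 0 := measure_mono_null (by simp) hsupp
  have hset : {u : EuclideanSpace ℝ (Fin d) | u ∈ sphere 0 1 ∧
      ⟪u, A⟫ ≤ ⟪u, B⟫ ∧ ⟪u, C⟫ ≤ ⟪u, B⟫} = lune (B - A) (C - B) ∩ sphere 0 1 := by
    ext u
    simp only [lune, Set.mem_inter_iff, Set.mem_ofPred_eq, inner_sub_right, sub_nonneg, sub_nonpos]
    tauto
  rw [hset, measure_inter_conull hsupp, measure_lune (by simpa using hd) hinv h₀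
    (sub_ne_zero.mpr hA.symm) (sub_ne_zero.mpr hC), ← neg_sub, angle_neg_left]
  rfl
end

section
/- Let λ be a Borel measure on ℝ with uncountable support such that ∫ min(x², 1) dλ(x) < ∞. Then for any finite collection of distinct real numbers a_1, …, a_n, the functions x ↦ e^{i a_j x} − 1 (j = 1, …, n), regarded as elements of the real Hilbert space L²(λ) of complex-valued square-integrable functions, are affinely independent. -/
/-!
Since `∑ tⱼ = 0`, the combination `∑ tⱼ (e^{i aⱼ x} - 1)` is the real-analytic function
`g x = ∑ tⱼ e^{i aⱼ x}`. It vanishes `λ`-a.e. and is continuous, so it vanishes on the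
support of `λ`; a closed uncountable subset of `ℝ` has an accumulation point
(Cantor–Bendixson), so the identity theorem gives `g = 0`. The maps `x ↦ e^{i aⱼ x}` are
distinct characters of `(ℝ, +)`, which are linearly independent (Dedekind), hence all `tⱼ`
vanish.
-/

open Real MeasureTheory Complex

/-- The topological support of a measure on `ℝ`: all points every open
neighbourhood of which has positive measure. -/
def measureSupport (μ : MeasureTheory.Measure ℝ) : Set ℝ :=
  {x : ℝ | ∀ U : Set ℝ, IsOpen U → x ∈ U → μ U ≠ 0}

open Filter Topology

lemma measureSupport_isClosed (μ : Measure ℝ) : IsClosed (measureSupport μ) := by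
  refine isOpen_compl_iff.1 (isOpen_iff_forall_mem_open.2 fun x hx => ?_)
  simp only [Set.mem_compl_iff, measureSupport, Set.mem_ofPred_eq, not_forall, not_not] at hx
  obtain ⟨U, hU, hxU, hμU⟩ := hx
  exact ⟨U, fun y hy hy' => hy' U hU hy hμU, hU, hxU⟩

lemma Continuous.eq_zero_of_mem_measureSupport {E : Type*} [TopologicalSpace E] [T1Space E]
    [Zero E] {μ : Measure ℝ} {f : ℝ → E} (hf : Continuous f) (h : f =ᵐ[μ] 0) {x : ℝ}
    (hx : x ∈ measureSupport μ) : f x = 0 := by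
  by_contra hfx
  exact hx {y | f y ≠ 0} (isOpen_compl_singleton.preimage hf) hfx (ae_iff.1 h)

lemma exists_accPt_of_isClosed_of_not_countable {α : Type*} [TopologicalSpace α]
    [SecondCountableTopology α] {C : Set α} (hC : IsClosed C) (hunc : ¬ C.Countable) :
    ∃ x, AccPt x (𝓟 C) := by
  obtain ⟨D, hD, ⟨x, hx⟩, hDC⟩ :=
    exists_perfect_nonempty_of_isClosed_of_not_countable hC hunc
  exact ⟨x, (hD.acc x hx).mono (principal_mono.2 hDC)⟩

lemma AnalyticOnNhd.eq_zero_of_accPt {𝕜 E : Type*} [NontriviallyNormedField 𝕜]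
    [PreconnectedSpace 𝕜] [NormedAddCommGroup E] [NormedSpace 𝕜 E] {f : 𝕜 → E}
    {s : Set 𝕜} {x : 𝕜} (hf : AnalyticOnNhd 𝕜 f Set.univ) (hx : AccPt x (𝓟 s))
    (hs : Set.EqOn f 0 s) : f = 0 :=
  funext fun z => hf.eqOn_zero_of_preconnected_of_frequently_eq_zero isPreconnected_univ
    (Set.mem_univ x) ((accPt_iff_frequently_nhdsNE.1 hx).mono hs) (Set.mem_univ z)

lemma analyticOnNhd_cexp_mul_ofReal (c : ℂ) :
    AnalyticOnNhd ℝ (fun x : ℝ => cexp (c * x)) Set.univ := fun x _ =>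
  analyticAt_cexp.restrictScalars.comp (analyticAt_const.mul (ofRealCLM.analyticAt x))

noncomputable def expIMulChar (a : ℝ) : Multiplicative ℝ →* ℂ where
  toFun x := cexp (I * a * x.toAdd)
  map_one' := by simp
  map_mul' x y := by simp [mul_add, Complex.exp_add]

lemma expIMulChar_injective : Function.Injective expIMulChar := by
  intro a b h
  by_contra hab
  have hsub : (a - b : ℂ) ≠ 0 := sub_ne_zero.2 (mod_cast hab)
  have hx := DFunLike.congr_fun h (Multiplicative.ofAdd (π / (a - b)))
  -- at `x = π / (a - b)` the two characters differ by the factor `e^{iπ} = -1`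
  have hshift : I * a * (π / (a - b) : ℝ) = I * b * (π / (a - b) : ℝ) + π * I := by
    push_cast
    field_simp
    ring
  simp only [expIMulChar, MonoidHom.coe_mk, OneHom.coe_mk, toAdd_ofAdd, hshift,
    exp_add_pi_mul_I, neg_eq_iff_add_eq_zero, ← two_mul, mul_eq_zero, two_ne_zero, false_or] at hx
  exact Complex.exp_ne_zero _ hx

lemma linearIndependent_cexp_I_mul {ι : Type*} {a : ι → ℝ} (ha : Function.Injective a) :
    LinearIndependent ℂ (fun j (x : ℝ) => cexp (I * a j * x)) :=
  (linearIndependent_monoidHom (Multiplicative ℝ) ℂ).comp _ (expIMulChar_injective.comp ha)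

theorem exp_sub_one_affine_independent_general
    (lam : Measure ℝ)
    (hunc : ¬ (measureSupport lam).Countable)
    (n : ℕ) (a : Fin n → ℝ) (ha : Function.Injective a)
    (t : Fin n → ℝ) (hsum : ∑ j, t j = 0)
    (hzero : (fun x : ℝ => ∑ j, (t j : ℂ) * (Complex.exp (Complex.I * a j * x) - 1))
      =ᵐ[lam] 0) :
    ∀ j, t j = 0 := by
  set g : ℝ → ℂ := fun x => ∑ j, (t j : ℂ) * cexp (I * a j * x)
  have hg_eq : (fun x : ℝ => ∑ j, (t j : ℂ) * (cexp (I * a j * x) - 1)) = g := by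
    funext x
    simp only [g, mul_sub, mul_one, Finset.sum_sub_distrib, ← ofReal_sum, hsum, ofReal_zero,
      sub_zero]
  have hg_an : AnalyticOnNhd ℝ g Set.univ :=
    Finset.analyticOnNhd_fun_sum _ fun j _ =>
      analyticOnNhd_const.mul (analyticOnNhd_cexp_mul_ofReal (I * a j))
  obtain ⟨x₀, hx₀⟩ :=
    exists_accPt_of_isClosed_of_not_countable (measureSupport_isClosed lam) hunc
  have hg_zero : g = 0 := hg_an.eq_zero_of_accPt hx₀ fun x hx =>
    hg_an.continuous.eq_zero_of_mem_measureSupport (hg_eq ▸ hzero) hx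
  intro j
  have ht := Fintype.linearIndependent_iff.1 (linearIndependent_cexp_I_mul ha) (fun j => t j)
    (by simpa [g, funext_iff] using hg_zero)
  exact_mod_cast ht j

/-- **Proposition.** If `λ` is a Borel measure on `ℝ` with uncountable support
such that `∫ min(x², 1) dλ(x) < ∞`, then any finite collection of functions of
the form `x ↦ e^{i a x} − 1`, `a ∈ ℝ`, is affinely independent in `L²(λ)`
viewed as a real Hilbert space: if real weights `t j` have zero sum and the
corresponding weighted combination vanishes `λ`-a.e., then all `t j` vanish. -/
theorem exp_sub_one_affine_independent
    (lam : Measure ℝ)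
    (hunc : ¬ (measureSupport lam).Countable)
    (hint : Integrable (fun x : ℝ => min (x ^ 2) 1) lam)
    (n : ℕ) (a : Fin n → ℝ) (ha : Function.Injective a)
    (t : Fin n → ℝ) (hsum : ∑ j, t j = 0)
    (hzero : (fun x : ℝ => ∑ j, (t j : ℂ) * (Complex.exp (Complex.I * a j * x) - 1))
      =ᵐ[lam] 0) :
    ∀ j, t j = 0 :=
  exp_sub_one_affine_independent_general lam hunc n a ha t hsum hzero
end

section
/- Let λ be a Borel measure on ℝ such that ∫ min(x², 1) dλ(x) < ∞. For each a ∈ ℝ, the function F(a) : x ↦ e^{2iax} − 1 belongs to L²(λ), and for all a, b ∈ ℝ one has ‖F(a) − F(b)‖_{L²(λ)} = 2 f(|a − b|), where f(t) := (∫ sin²(tx) dλ(x))^{1/2}. In particular, a ↦ F(a) is an isometric embedding of ℝ equipped with the semimetric (a, b) ↦ 2 f(|a − b|) into the Hilbert space L²(λ). -/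
open Real MeasureTheory Complex

/-! Since `F a − F b = e^{2ibx} (e^{2i(a−b)x} − 1)` and `|e^{2iθ} − 1| = 2 |sin θ|`, the
pointwise modulus of `F a − F b` is `2 |sin((a − b) x)|`; the bound
`sin²(tx) ≤ max(t², 1) · min(x², 1)` makes its square integrable. -/

lemma norm_exp_two_I_mul_sub_one (t x : ℝ) :
    ‖Complex.exp (2 * I * t * x) - 1‖ = 2 * |Real.sin (t * x)| := by
  have h : 2 * I * t * x = I * ((2 * (t * x) : ℝ) : ℂ) := by push_cast; ring
  rw [h, norm_exp_I_mul_ofReal_sub_one, mul_div_cancel_left₀ _ two_ne_zero, norm_mul,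
    Real.norm_two, Real.norm_eq_abs]

lemma norm_exp_two_I_mul_sub_exp_two_I_mul (a b x : ℝ) :
    ‖(Complex.exp (2 * I * a * x) - 1) - (Complex.exp (2 * I * b * x) - 1)‖
      = 2 * |Real.sin (|a - b| * x)| := by
  have hfactor : (Complex.exp (2 * I * a * x) - 1) - (Complex.exp (2 * I * b * x) - 1)
      = Complex.exp (((2 * b * x : ℝ) : ℂ) * I) * (Complex.exp (2 * I * (a - b : ℝ) * x) - 1) := by
    rw [mul_sub, ← Complex.exp_add]
    push_cast
    ring_nf
  rw [hfactor, norm_mul, norm_exp_ofReal_mul_I, one_mul, norm_exp_two_I_mul_sub_one]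
  rcases abs_cases (a - b) with ⟨h, _⟩ | ⟨h, _⟩
  · rw [h]
  · rw [h, neg_mul, Real.sin_neg, abs_neg]

lemma sin_mul_sq_le_max_mul_min (t x : ℝ) :
    Real.sin (t * x) ^ 2 ≤ max (t ^ 2) 1 * min (x ^ 2) 1 := by
  rw [mul_min_of_nonneg _ _ (by positivity), mul_one]
  calc Real.sin (t * x) ^ 2 ≤ min ((t * x) ^ 2) 1 := le_min sin_sq_le_sq (sin_sq_le_one _)
    _ ≤ min (max (t ^ 2) 1 * x ^ 2) (max (t ^ 2) 1) := by
      rw [mul_pow]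
      gcongr
      · exact le_max_left _ _
      · exact le_max_right _ _

lemma integrable_sin_mul_sq {lam : Measure ℝ}
    (hint : Integrable (fun x : ℝ => min (x ^ 2) 1) lam) (t : ℝ) :
    Integrable (fun x : ℝ => Real.sin (t * x) ^ 2) lam :=
  (hint.const_mul (max (t ^ 2) 1)).mono' (by fun_prop) <| ae_of_all _ fun x => by
    rw [Real.norm_of_nonneg (sq_nonneg _)]
    exact sin_mul_sq_le_max_mul_min t x

lemma memLp_exp_two_I_mul_sub_one {lam : Measure ℝ}
    (hint : Integrable (fun x : ℝ => min (x ^ 2) 1) lam) (t : ℝ) :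
    MemLp (fun x : ℝ => Complex.exp (2 * I * t * x) - 1) 2 lam := by
  refine (memLp_two_iff_integrable_sq_norm (by fun_prop)).2 ?_
  refine ((integrable_sin_mul_sq hint t).const_mul 4).congr (ae_of_all _ fun x => ?_)
  simp only [norm_exp_two_I_mul_sub_one, mul_pow, sq_abs]
  norm_num

lemma MeasureTheory.MemLp.eLpNorm_two_eq_ofReal_sqrt {α E : Type*} [MeasurableSpace α]
    {μ : Measure α} [NormedAddCommGroup E] {f : α → E} (hf : MemLp f 2 μ) :
    eLpNorm f 2 μ = ENNReal.ofReal (√(∫ x, ‖f x‖ ^ 2 ∂μ)) := by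
  simp [hf.eLpNorm_eq_integral_rpow_norm two_ne_zero ENNReal.ofNat_ne_top, Real.sqrt_eq_rpow]

/-- **Lemma (Schoenberg embedding).** Let `λ` be a Borel measure on `ℝ` with
`∫ min(x², 1) dλ(x) < ∞`.  Then for every `a ∈ ℝ` the function
`F a : x ↦ e^{2iax} − 1` lies in `L²(λ)`, and for all `a, b ∈ ℝ`,
`‖F a − F b‖_{L²(λ)} = 2 f(|a − b|)` where `f t = (∫ sin²(tx) dλ(x))^{1/2}`;
that is, `F` is an isometric embedding of `ℝ` with the semimetric
`(a, b) ↦ 2 f(|a − b|)` into the Hilbert space `L²(λ)`. -/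
theorem exp_two_ia_sub_one_memLp_and_dist
    (lam : Measure ℝ)
    (hint : Integrable (fun x : ℝ => min (x ^ 2) 1) lam) :
    (∀ a : ℝ, MemLp (fun x : ℝ => Complex.exp (2 * Complex.I * a * x) - 1) 2 lam) ∧
    (∀ a b : ℝ,
      eLpNorm (fun x : ℝ =>
          (Complex.exp (2 * Complex.I * a * x) - 1)
            - (Complex.exp (2 * Complex.I * b * x) - 1)) 2 lam
        = ENNReal.ofReal (2 * Real.sqrt (∫ x, Real.sin (|a - b| * x) ^ 2 ∂lam))) := by
  have hF := memLp_exp_two_I_mul_sub_one hint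
  refine ⟨hF, fun a b => ((hF a).sub (hF b)).eLpNorm_two_eq_ofReal_sqrt.trans ?_⟩
  simp only [Pi.sub_apply, norm_exp_two_I_mul_sub_exp_two_I_mul, mul_pow, sq_abs,
    integral_const_mul]
  rw [Real.sqrt_mul (by norm_num), show (2 : ℝ) ^ 2 = 2 * 2 by norm_num,
    Real.sqrt_mul_self zero_le_two]
end

section
/- Let λ be a Borel measure on ℝ such that ∫ min(x², 1) dλ(x) < ∞, and define f(t) := (∫ sin²(tx) dλ(x))^{1/2} for t ≥ 0. Then f is subadditive: for all s, t ≥ 0, f(t + s) ≤ f(t) + f(s). -/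
open Real MeasureTheory

/-! Pointwise `|sin ((t + s) x)| ≤ |sin (t x)| + |sin (s x)|`, so subadditivity is Minkowski's
inequality in `L²(λ)`. Each `x ↦ sin (c x)` lies in `L²(λ)` because
`sin² (c x) ≤ max (c², 1) · min (x², 1)`. -/

theorem Real.abs_sin_add_le (a b : ℝ) : |sin (a + b)| ≤ |sin a| + |sin b| :=
  calc |sin (a + b)| = |sin a * cos b + cos a * sin b| := by rw [sin_add]
    _ ≤ |sin a| * |cos b| + |cos a| * |sin b| := by
      simpa only [abs_mul] using abs_add_le (sin a * cos b) (cos a * sin b)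
    _ ≤ |sin a| * 1 + 1 * |sin b| := by gcongr <;> exact abs_cos_le_one _
    _ = |sin a| + |sin b| := by ring

theorem Real.sin_mul_sq_le (c x : ℝ) : sin (c * x) ^ 2 ≤ max (c ^ 2) 1 * min (x ^ 2) 1 := by
  rcases le_total (x ^ 2) 1 with hx | hx
  · calc sin (c * x) ^ 2 ≤ c ^ 2 * x ^ 2 := mul_pow c x 2 ▸ sin_sq_le_sq
      _ ≤ max (c ^ 2) 1 * min (x ^ 2) 1 := by
        rw [min_eq_left hx]; gcongr; exact le_max_left _ _
  · rw [min_eq_right hx, mul_one]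
    exact (sin_sq_le_one _).trans (le_max_right _ _)

namespace MeasureTheory

variable {α : Type*} [MeasurableSpace α] {μ : Measure α}

theorem MemLp.sqrt_integral_sq_eq {f : α → ℝ} (hf : MemLp f 2 μ) :
    √(∫ x, f x ^ 2 ∂μ) = (eLpNorm f 2 μ).toReal := by
  rw [hf.eLpNorm_eq_integral_rpow_norm two_ne_zero ENNReal.ofNat_ne_top,
    ENNReal.toReal_ofReal (by positivity), sqrt_eq_rpow]
  norm_num [sq_abs]

theorem sqrt_integral_sq_le_of_abs_le_add {f g h : α → ℝ} (hf : MemLp f 2 μ) (hg : MemLp g 2 μ)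
    (hh : MemLp h 2 μ) (hle : ∀ᵐ x ∂μ, |h x| ≤ |f x| + |g x|) :
    √(∫ x, h x ^ 2 ∂μ) ≤ √(∫ x, f x ^ 2 ∂μ) + √(∫ x, g x ^ 2 ∂μ) := by
  rw [hf.sqrt_integral_sq_eq, hg.sqrt_integral_sq_eq, hh.sqrt_integral_sq_eq,
    ← ENNReal.toReal_add hf.eLpNorm_ne_top hg.eLpNorm_ne_top]
  refine ENNReal.toReal_mono (ENNReal.add_ne_top.2 ⟨hf.eLpNorm_ne_top, hg.eLpNorm_ne_top⟩) ?_
  calc eLpNorm h 2 μ ≤ eLpNorm (fun x => ‖f x‖ + ‖g x‖) 2 μ := eLpNorm_mono_ae_real hle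
    _ ≤ eLpNorm (fun x => ‖f x‖) 2 μ + eLpNorm (fun x => ‖g x‖) 2 μ :=
      eLpNorm_add_le hf.1.norm hg.1.norm one_le_two
    _ = eLpNorm f 2 μ + eLpNorm g 2 μ := by rw [eLpNorm_norm, eLpNorm_norm]

end MeasureTheory

theorem memLp_two_sin_mul {μ : Measure ℝ} (hint : Integrable (fun x : ℝ => min (x ^ 2) 1) μ)
    (c : ℝ) : MemLp (fun x => sin (c * x)) 2 μ := by
  have hmeas : AEStronglyMeasurable (fun x => sin (c * x)) μ := by fun_prop
  rw [memLp_two_iff_integrable_sq hmeas]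
  refine (hint.const_mul (max (c ^ 2) 1)).mono' (hmeas.pow 2) (ae_of_all _ fun x => ?_)
  rw [norm_of_nonneg (sq_nonneg _)]
  exact sin_mul_sq_le c x

theorem admissible_cost_subadditive_general
    (lam : Measure ℝ)
    (hint : Integrable (fun x : ℝ => min (x ^ 2) 1) lam)
    (s t : ℝ) :
    Real.sqrt (∫ x, Real.sin ((t + s) * x) ^ 2 ∂lam)
      ≤ Real.sqrt (∫ x, Real.sin (t * x) ^ 2 ∂lam)
        + Real.sqrt (∫ x, Real.sin (s * x) ^ 2 ∂lam) :=
  sqrt_integral_sq_le_of_abs_le_add (memLp_two_sin_mul hint t) (memLp_two_sin_mul hint s)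
    (memLp_two_sin_mul hint (t + s)) (ae_of_all _ fun x => add_mul t s x ▸ abs_sin_add_le _ _)

/-- **Subadditivity of an admissible cost function.** For a Borel measure `λ`
on `ℝ` with `∫ min(x², 1) dλ(x) < ∞`, the function
`f(t) = (∫ sin²(tx) dλ(x))^{1/2}` is subadditive on `[0, ∞)`. -/
theorem admissible_cost_subadditive
    (lam : Measure ℝ)
    (hint : Integrable (fun x : ℝ => min (x ^ 2) 1) lam)
    (s t : ℝ) (hs : 0 ≤ s) (ht : 0 ≤ t) :
    Real.sqrt (∫ x, Real.sin ((t + s) * x) ^ 2 ∂lam)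
      ≤ Real.sqrt (∫ x, Real.sin (t * x) ^ 2 ∂lam)
        + Real.sqrt (∫ x, Real.sin (s * x) ^ 2 ∂lam) :=
  admissible_cost_subadditive_general lam hint s t
end

section
/- Let λ be a nonzero finite Borel measure on ℝ whose support is contained in the interval [0.9, 1.1], and define f(t) := (∫ sin²(tx) dλ(x))^{1/2}. Then f(π) < f(π/2); in particular, f is not monotone increasing. -/
open Real MeasureTheory Set

theorem measureSupport_eq_support (μ : Measure ℝ) : measureSupport μ = μ.support := by
  simp only [measureSupport, Measure.support_eq_forall_isOpen, pos_iff_ne_zero]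
  exact Set.ext fun x => ⟨fun h U hxU hU => h U hU hxU, fun h U hU hxU => h U hxU hU⟩

theorem ae_mem_of_measureSupport_subset {μ : Measure ℝ} {s : Set ℝ}
    (h : measureSupport μ ⊆ s) : ∀ᵐ x ∂μ, x ∈ s :=
  Filter.mem_of_superset Measure.support_mem_ae (measureSupport_eq_support μ ▸ h)

theorem integral_lt_integral_of_ae_lt {α : Type*} [MeasurableSpace α] {μ : Measure α}
    (hμ : μ ≠ 0) {f g : α → ℝ} (hf : Integrable f μ) (hg : Integrable g μ)
    (hfg : ∀ᵐ x ∂μ, f x < g x) : ∫ x, f x ∂μ < ∫ x, g x ∂μ := by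
  rw [← sub_pos, ← integral_sub hg hf]
  refine (integral_pos_iff_support_of_nonneg_ae ?_ (hg.sub hf)).2 ?_
  · filter_upwards [hfg] with x hx using (sub_pos.2 hx).le
  · have hsupp : ∀ᵐ x ∂μ, x ∈ Function.support (g - f) := by
      filter_upwards [hfg] with x hx using (sub_pos.2 hx).ne'
    refine pos_iff_ne_zero.2 fun hnull => ?_
    have : (ae μ).NeBot := ae_neBot.2 hμ
    obtain ⟨x, hx, hx'⟩ := (hsupp.and (compl_mem_ae_iff.2 hnull)).exists
    exact hx' hx

theorem integrable_sin_mul_sq_s10 (μ : Measure ℝ) [IsFiniteMeasure μ] (c : ℝ) :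
    Integrable (fun x => sin (c * x) ^ 2) μ :=
  Integrable.of_bound (by fun_prop) 1 (ae_of_all _ fun x => by simpa using sin_sq_le_one (c * x))

theorem cos_lt_one_half {y : ℝ} (h₁ : π / 3 < y) (h₂ : y ≤ π) : cos y < 1 / 2 :=
  cos_pi_div_three ▸ cos_lt_cos_of_nonneg_of_le_pi (by positivity) h₂ h₁

theorem sin_sq_pi_mul_lt_sin_sq_pi_div_two_mul {x : ℝ} (hx : x ∈ Ioo (2 / 3 : ℝ) (4 / 3)) :
    sin (π * x) ^ 2 < sin (π / 2 * x) ^ 2 := by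
  set y := π / 2 * x with hy
  have hpi := pi_pos
  have hy₁ : π / 3 < y := by rw [hy]; nlinarith [hx.1]
  have hy₂ : y < 2 * π / 3 := by rw [hy]; nlinarith [hx.2]
  have hsin : 0 < sin y := sin_pos_of_pos_of_lt_pi (by linarith) (by linarith)
  have hcos₁ : cos y < 1 / 2 := cos_lt_one_half hy₁ (by linarith)
  have hcos₂ : -(1 / 2) < cos y := by
    have := cos_lt_one_half (y := π - y) (by linarith) (by linarith)
    rwa [cos_pi_sub, neg_lt] at this
  have hcos : 4 * cos y ^ 2 < 1 := by nlinarith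
  calc sin (π * x) ^ 2 = sin y ^ 2 * (4 * cos y ^ 2) := by
        rw [show π * x = 2 * y by rw [hy]; ring, sin_two_mul]; ring
    _ < sin y ^ 2 * 1 := mul_lt_mul_of_pos_left hcos (by positivity)
    _ = sin y ^ 2 := mul_one _

/-- **Example (non-monotonicity).** If `λ` is a nonzero finite Borel measure on
`ℝ` with support contained in `[0.9, 1.1]` and
`f(t) = (∫ sin²(tx) dλ(x))^{1/2}`, then `f(π) < f(π/2)`; in particular `f` is
not monotone increasing. -/
theorem admissible_cost_not_monotone
    (lam : Measure ℝ) [IsFiniteMeasure lam] (hne : lam ≠ 0)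
    (hsupp : measureSupport lam ⊆ Icc (0.9 : ℝ) 1.1) :
    Real.sqrt (∫ x, Real.sin (π * x) ^ 2 ∂lam)
      < Real.sqrt (∫ x, Real.sin (π / 2 * x) ^ 2 ∂lam) := by
  have hmem : ∀ᵐ x ∂lam, x ∈ Ioo (2 / 3 : ℝ) (4 / 3) :=
    (ae_mem_of_measureSupport_subset hsupp).mono fun x hx =>
      ⟨by linarith [hx.1], by linarith [hx.2]⟩
  refine sqrt_lt_sqrt (integral_nonneg fun x => sq_nonneg _) ?_
  exact integral_lt_integral_of_ae_lt hne (integrable_sin_mul_sq_s10 lam π)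
    (integrable_sin_mul_sq_s10 lam (π / 2))
    (hmem.mono fun _ hx => sin_sq_pi_mul_lt_sin_sq_pi_div_two_mul hx)
end

section
/- Let P, Q, R be points in ℝ² with Q ≠ P and R ≠ P, and let w₁ ≥ 0 and w₂, w₃ > 0 be reals. Define L(X) := w₁·|PX| + w₂·|QX| + w₃·|RX| for X ∈ ℝ². Suppose P minimizes L over ℝ² (i.e., L(P) ≤ L(X) for all X) and w₁ < w₂ + w₃. Then cos(∠QPR) ≤ (w₁² − w₂² − w₃²)/(2 w₂ w₃), where ∠QPR is the unsigned angle in [0, π] between Q − P and R − P. Equivalently, either w₁ ≥ w₂ + w₃, or there is a triangle with side lengths w₁, w₂, w₃ and the angle ∠QPR is at least the outer angle between the sides of lengths w₂ and w₃ in that triangle. -/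
/-!
Let `v = w₂ u + w₃ u'`, where `u`, `u'` are the unit vectors from `P` towards `Q` and `R`.
Moving from `P` to `P + t v` decreases `w₂|QX| + w₃|RX|` at rate `|v|²` (up to `O(t²)`, by the
tangent-line bound for the norm) and increases `w₁|PX|` by exactly `t w₁ |v|`, so minimality of
`P` forces `|v| ≤ w₁`. The law of cosines gives `|v|² = w₂² + w₃² + 2 w₂ w₃ cos ∠QPR`.
-/

open Real EuclideanGeometry
open Filter Topology Finset
open scoped RealInnerProductSpace

section

variable {E : Type*} [NormedAddCommGroup E] [InnerProductSpace ℝ E]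

theorem norm_sub_le_of_norm_pos {x : E} (hx : 0 < ‖x‖) (u : E) :
    ‖x - u‖ ≤ ‖x‖ - ⟪x, u⟫ / ‖x‖ + ‖u‖ ^ 2 / (2 * ‖x‖) := by
  -- AM-GM: the right-hand side is `(‖x - u‖² + ‖x‖²) / (2‖x‖)`.
  have h_rhs : ‖x‖ - ⟪x, u⟫ / ‖x‖ + ‖u‖ ^ 2 / (2 * ‖x‖)
      = (‖x - u‖ ^ 2 + ‖x‖ ^ 2) / (2 * ‖x‖) := by
    rw [norm_sub_sq_real]
    field_simp
    ring
  rw [h_rhs, le_div_iff₀ (by positivity)]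
  nlinarith [sq_nonneg (‖x - u‖ - ‖x‖)]

variable {ι : Type*} [Fintype ι]

theorem exists_sum_mul_norm_sub_smul_le {a : ι → E} (ha : ∀ i, a i ≠ 0) {w : ι → ℝ}
    (hw : ∀ i, 0 ≤ w i) :
    ∃ C, ∀ t : ℝ, ∑ i, w i * ‖a i - t • ∑ j, (w j / ‖a j‖) • a j‖
      ≤ ∑ i, w i * ‖a i‖ - t * ‖∑ j, (w j / ‖a j‖) • a j‖ ^ 2 + t ^ 2 * C := by
  set v := ∑ j, (w j / ‖a j‖) • a j
  refine ⟨‖v‖ ^ 2 * ∑ i, w i / (2 * ‖a i‖), fun t => ?_⟩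
  have h_term : ∀ i, w i * ‖a i - t • v‖ ≤ w i * ‖a i‖ - t * ⟪(w i / ‖a i‖) • a i, v⟫
      + t ^ 2 * (‖v‖ ^ 2 * (w i / (2 * ‖a i‖))) := by
    intro i
    have hai : 0 < ‖a i‖ := norm_pos_iff.2 (ha i)
    calc w i * ‖a i - t • v‖
        ≤ w i * (‖a i‖ - ⟪a i, t • v⟫ / ‖a i‖ + ‖t • v‖ ^ 2 / (2 * ‖a i‖)) :=
          mul_le_mul_of_nonneg_left (norm_sub_le_of_norm_pos hai _) (hw i)
      _ = _ := by
          rw [real_inner_smul_left, real_inner_smul_right, norm_smul, mul_pow,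
            Real.norm_eq_abs, sq_abs]
          field_simp
  calc ∑ i, w i * ‖a i - t • v‖
      ≤ ∑ i, (w i * ‖a i‖ - t * ⟪(w i / ‖a i‖) • a i, v⟫
          + t ^ 2 * (‖v‖ ^ 2 * (w i / (2 * ‖a i‖)))) :=
        sum_le_sum fun i _ => h_term i
    _ = _ := by
        rw [sum_add_distrib, sum_sub_distrib, ← mul_sum, ← mul_sum, ← mul_sum, ← sum_inner,
          real_inner_self_eq_norm_sq]

/-- First-order optimality condition for a weighted Fermat–Weber problem at one of its
anchor points `P`. -/
theorem norm_sum_div_norm_smul_sub_le {w₀ : ℝ} (hw₀ : 0 ≤ w₀) {w : ι → ℝ} (hw : ∀ i, 0 ≤ w i)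
    {A : ι → E} {P : E} (hA : ∀ i, A i ≠ P)
    (hmin : ∀ X, ∑ i, w i * dist (A i) P ≤ w₀ * dist P X + ∑ i, w i * dist (A i) X) :
    ‖∑ i, (w i / ‖A i - P‖) • (A i - P)‖ ≤ w₀ := by
  obtain ⟨C, hC⟩ := exists_sum_mul_norm_sub_smul_le (fun i => sub_ne_zero.2 (hA i)) hw
  set v := ∑ i, (w i / ‖A i - P‖) • (A i - P)
  have h_pos : ∀ t > 0, ‖v‖ ^ 2 ≤ w₀ * ‖v‖ + t * C := by
    intro t ht
    have h := hmin (P + t • v)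
    rw [dist_self_add_right, norm_smul, Real.norm_eq_abs, abs_of_pos ht] at h
    simp only [dist_eq_norm, sub_add_eq_sub_sub] at h
    have h' : t * ‖v‖ ^ 2 ≤ t * (w₀ * ‖v‖ + t * C) := by linarith [hC t]
    exact le_of_mul_le_mul_left h' ht
  have h_lim : Tendsto (fun t => w₀ * ‖v‖ + t * C) (𝓝[>] 0) (𝓝 (w₀ * ‖v‖)) := by
    refine tendsto_nhdsWithin_of_tendsto_nhds ?_
    simpa using ((tendsto_id (x := 𝓝 (0 : ℝ))).mul_const C).const_add (w₀ * ‖v‖)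
  have h_sq : ‖v‖ ^ 2 ≤ w₀ * ‖v‖ :=
    ge_of_tendsto h_lim (eventually_nhdsWithin_of_forall fun t ht => h_pos t ht)
  nlinarith [norm_nonneg v]

theorem norm_div_smul_add_div_smul_sq {x y : E} (hx : x ≠ 0) (hy : y ≠ 0) {r s : ℝ}
    (hr : 0 < r) (hs : 0 < s) :
    ‖(r / ‖x‖) • x + (s / ‖y‖) • y‖ ^ 2
      = r ^ 2 + s ^ 2 + 2 * r * s * cos (InnerProductGeometry.angle x y) := by
  have hx' : 0 < ‖x‖ := norm_pos_iff.2 hx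
  have hy' : 0 < ‖y‖ := norm_pos_iff.2 hy
  rw [norm_add_sq_real, ← InnerProductGeometry.cos_angle_mul_norm_mul_norm,
    InnerProductGeometry.angle_smul_left_of_pos _ _ (by positivity),
    InnerProductGeometry.angle_smul_right_of_pos _ _ (by positivity)]
  simp only [norm_smul, Real.norm_eq_abs, abs_of_pos (div_pos hr hx'),
    abs_of_pos (div_pos hs hy')]
  field_simp
  ring

end

theorem angle_at_minimizer_general
    (P Q R : EuclideanSpace ℝ (Fin 2)) (hQ : Q ≠ P) (hR : R ≠ P)
    (w₁ w₂ w₃ : ℝ) (h₁ : 0 ≤ w₁) (h₂ : 0 < w₂) (h₃ : 0 < w₃)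
    (hmin : ∀ X : EuclideanSpace ℝ (Fin 2),
      w₁ * dist P P + w₂ * dist Q P + w₃ * dist R P
        ≤ w₁ * dist P X + w₂ * dist Q X + w₃ * dist R X) :
    Real.cos (EuclideanGeometry.angle Q P R)
      ≤ (w₁ ^ 2 - w₂ ^ 2 - w₃ ^ 2) / (2 * w₂ * w₃) := by
  have h_norm := norm_sum_div_norm_smul_sub_le h₁ (w := ![w₂, w₃]) (A := ![Q, R]) (P := P)
    (by simp [Fin.forall_fin_two, h₂.le, h₃.le]) (by simp [Fin.forall_fin_two, hQ, hR])
    (fun X => by simpa [Fin.sum_univ_two, add_assoc] using hmin X)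
  simp only [Fin.sum_univ_two, Matrix.cons_val_zero, Matrix.cons_val_one] at h_norm
  have h_sq := norm_div_smul_add_div_smul_sq (sub_ne_zero.2 hQ) (sub_ne_zero.2 hR) h₂ h₃
  have h_angle : ∠ Q P R = InnerProductGeometry.angle (Q - P) (R - P) := rfl
  rw [h_angle, le_div_iff₀ (by positivity)]
  nlinarith [pow_le_pow_left₀ (norm_nonneg _) h_norm 2]

/-- **Lemma (angle condition at a minimizing vertex).** Let `P, Q, R ∈ ℝ²` with
`Q ≠ P`, `R ≠ P`, let `w₁ ≥ 0`, `w₂, w₃ > 0`, and suppose `P` minimizes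
`L(X) = w₁|PX| + w₂|QX| + w₃|RX|` and `w₁ < w₂ + w₃`.  Then
`cos ∠QPR ≤ (w₁² − w₂² − w₃²) / (2 w₂ w₃)`, i.e. the angle `∠QPR` is at least
the outer angle between the sides `w₂`, `w₃` of a triangle with side lengths
`w₁, w₂, w₃`. -/
theorem angle_at_minimizer
    (P Q R : EuclideanSpace ℝ (Fin 2)) (hQ : Q ≠ P) (hR : R ≠ P)
    (w₁ w₂ w₃ : ℝ) (h₁ : 0 ≤ w₁) (h₂ : 0 < w₂) (h₃ : 0 < w₃)
    (hmin : ∀ X : EuclideanSpace ℝ (Fin 2),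
      w₁ * dist P P + w₂ * dist Q P + w₃ * dist R P
        ≤ w₁ * dist P X + w₂ * dist Q X + w₃ * dist R X)
    (hlt : w₁ < w₂ + w₃) :
    Real.cos (EuclideanGeometry.angle Q P R)
      ≤ (w₁ ^ 2 - w₂ ^ 2 - w₃ ^ 2) / (2 * w₂ * w₃) :=
  angle_at_minimizer_general P Q R hQ hR w₁ w₂ w₃ h₁ h₂ h₃ hmin
end
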